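/- Let f: ℝⁿ → ℝ be differentiable and δ ∈ (0,1]. Then ∇f is (1/δ)-cocoercive if and only if ∇f is (1/2)-averaged and ((δ+1)/2)-negatively averaged. -/

import Mathlib

/-!
Write `d = ∇f x - ∇f y` and `e = x - y`. Each averagedness condition is a quadratic
inequality in `d` and `e`: `(1/δ)∇f` is `1/2`-averaged iff `‖d‖² ≤ δ⟪d, e⟫`, `∇f` is
`1/2`-averaged iff `‖d‖² ≤ ⟪d, e⟫`, and `-∇f` is `(δ+1)/2`-averaged iff
`‖d‖² + (1-δ)⟪d, e⟫ ≤ δ‖e‖²`. The forward implications then follow from Cauchy–Schwarz.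
Conversely the two conditions make `∇f` monotone and `δ Id - ∇f` monotone, i.e. `f` is
convex and `δ`-smooth, and the Baillon–Haddad argument gives cocoercivity: comparing `f` at
`x`, `y` and the gradient step `x - δ⁻¹ d` yields `f y + ⟪∇f y, e⟫ + ‖d‖²/(2δ) ≤ f x`, and adding
this to its copy with `x`, `y` swapped gives `‖d‖² ≤ δ⟪d, e⟫`.
-/

open scoped RealInnerProductSpace

/-- A mapping is nonexpansive if it is 1-Lipschitz. -/
def Nonexpansive {n : ℕ} (T : EuclideanSpace ℝ (Fin n) → EuclideanSpace ℝ (Fin n)) : Prop :=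
  ∀ x y, ‖T x - T y‖ ≤ ‖x - y‖

/-- `T` is `α`-averaged: `T = (1-α)Id + αS` for some nonexpansive `S`. -/
def Averaged {n : ℕ} (T : EuclideanSpace ℝ (Fin n) → EuclideanSpace ℝ (Fin n)) (α : ℝ) : Prop :=
  ∃ S, Nonexpansive S ∧ ∀ x, T x = (1 - α) • x + α • S x

section InnerProductSpace

variable {E : Type*} [NormedAddCommGroup E] [InnerProductSpace ℝ E]

def Cocoercive (T : E → E) (β : ℝ) : Prop :=
  ∀ x y, β * ‖T x - T y‖ ^ 2 ≤ ⟪T x - T y, x - y⟫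

theorem Cocoercive.weaken {T : E → E} {β β' : ℝ} (hT : Cocoercive T β) (h : β' ≤ β) :
    Cocoercive T β' :=
  fun x y => (mul_le_mul_of_nonneg_right h (sq_nonneg _)).trans (hT x y)

theorem cocoercive_smul_iff {T : E → E} {c : ℝ} (hc : 0 < c) (β : ℝ) :
    Cocoercive (fun x => c • T x) β ↔ Cocoercive T (c * β) := by
  refine forall₂_congr fun x y => ?_
  rw [← smul_sub, norm_smul, real_inner_smul_left, mul_pow, Real.norm_eq_abs, sq_abs,
    show β * (c ^ 2 * ‖T x - T y‖ ^ 2) = c * (c * β * ‖T x - T y‖ ^ 2) by ring,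
    mul_le_mul_iff_right₀ hc]

theorem Cocoercive.norm_sub_le {T : E → E} {β : ℝ} (hT : Cocoercive T β) (x y : E) :
    β * ‖T x - T y‖ ≤ ‖x - y‖ := by
  rcases (norm_nonneg (T x - T y)).eq_or_lt with h0 | h0
  · rw [← h0, mul_zero]
    exact norm_nonneg _
  · refine le_of_mul_le_mul_right ?_ h0
    calc β * ‖T x - T y‖ * ‖T x - T y‖ = β * ‖T x - T y‖ ^ 2 := by ring
      _ ≤ ⟪T x - T y, x - y⟫ := hT x y
      _ ≤ ‖T x - T y‖ * ‖x - y‖ := real_inner_le_norm _ _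
      _ = ‖x - y‖ * ‖T x - T y‖ := mul_comm _ _

theorem Cocoercive.norm_sq_add_inner_le {T : E → E} {δ : ℝ} (hT : Cocoercive T δ⁻¹)
    (hδ : 0 < δ) (x y : E) :
    ‖T x - T y‖ ^ 2 + (1 - δ) * ⟪T x - T y, x - y⟫ ≤ δ * ‖x - y‖ ^ 2 := by
  have hcoco : ‖T x - T y‖ ^ 2 ≤ δ * ⟪T x - T y, x - y⟫ := by
    have := mul_le_mul_of_nonneg_left (hT x y) hδ.le
    rwa [← mul_assoc, mul_inv_cancel₀ hδ.ne', one_mul] at this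
  have hlip : ‖T x - T y‖ ≤ δ * ‖x - y‖ := by
    have := hT.norm_sub_le x y
    rwa [inv_mul_le_iff₀ hδ] at this
  calc ‖T x - T y‖ ^ 2 + (1 - δ) * ⟪T x - T y, x - y⟫ ≤ ⟪T x - T y, x - y⟫ := by linarith
    _ ≤ ‖T x - T y‖ * ‖x - y‖ := real_inner_le_norm _ _
    _ ≤ δ * ‖x - y‖ * ‖x - y‖ := by gcongr
    _ = δ * ‖x - y‖ ^ 2 := by ring

/-- By Cauchy–Schwarz the hypothesis gives `(⟪d, e⟫ - δ‖e‖²)(⟪d, e⟫ + ‖e‖²) ≤ 0`. -/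
theorem inner_le_of_norm_sq_add_inner_le {d e : E} {δ : ℝ} (hδ : 0 ≤ δ)
    (h : ‖d‖ ^ 2 + (1 - δ) * ⟪d, e⟫ ≤ δ * ‖e‖ ^ 2) : ⟪d, e⟫ ≤ δ * ‖e‖ ^ 2 := by
  have hcs : ⟪d, e⟫ ^ 2 ≤ ‖d‖ ^ 2 * ‖e‖ ^ 2 := by
    rw [← mul_pow]
    exact sq_le_sq' (neg_le_of_abs_le (abs_real_inner_le_norm d e)) (real_inner_le_norm d e)
  by_contra! hgt
  have hpos : 0 < ⟪d, e⟫ + ‖e‖ ^ 2 := by nlinarith [sq_nonneg ‖e‖]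
  nlinarith [mul_pos (sub_pos.2 hgt) hpos, mul_le_mul_of_nonneg_right h (sq_nonneg ‖e‖)]

end InnerProductSpace

section Gradient

variable {E : Type*} [NormedAddCommGroup E] [InnerProductSpace ℝ E] [CompleteSpace E]
  {f : E → ℝ} {g : E → E}

theorem add_inner_le_of_hasGradientAt_of_monotone (hf : ∀ x, HasGradientAt f (g x) x)
    (hg : ∀ x y, 0 ≤ ⟪g x - g y, x - y⟫) (x z : E) : f x + ⟪g x, z - x⟫ ≤ f z := by
  set d := z - x
  have hline (t : ℝ) : HasDerivAt (fun t : ℝ => f (x + t • d)) ⟪g (x + t • d), d⟫ t := by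
    have hpath : HasDerivAt (fun t : ℝ => x + t • d) d t := by
      simpa using ((hasDerivAt_id t).smul_const d).const_add x
    simpa [Function.comp_def] using
      (hasGradientAt_iff_hasFDerivAt.mp (hf (x + t • d))).comp_hasDerivAt t hpath
  obtain ⟨c, hc, hslope⟩ := exists_hasDerivAt_eq_slope (fun t : ℝ => f (x + t • d))
    (fun t => ⟪g (x + t • d), d⟫) one_pos
    (fun t _ => (hline t).continuousAt.continuousWithinAt) (fun t _ => hline t)
  have hmono : ⟪g x, d⟫ ≤ ⟪g (x + c • d), d⟫ := by
    have h := hg (x + c • d) x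
    rw [add_sub_cancel_left, real_inner_smul_right, inner_sub_left] at h
    nlinarith [hc.1]
  simp only [one_smul, zero_smul, add_zero, add_sub_cancel, sub_zero, div_one, d] at hslope
  linarith

theorem hasGradientAt_half_smul_norm_sq_sub (hf : ∀ x, HasGradientAt f (g x) x) (L : ℝ)
    (x : E) : HasGradientAt (fun w => L / 2 * ‖w‖ ^ 2 - f w) (L • x - g x) x := by
  have hsq : HasFDerivAt (fun w : E => ‖w‖ ^ 2) (2 • innerSL ℝ x) x := by
    simpa using (hasFDerivAt_id x).norm_sq
  rw [hasGradientAt_iff_hasFDerivAt]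
  refine ((hsq.const_mul (L / 2)).sub (hasGradientAt_iff_hasFDerivAt.mp (hf x))).congr_fderiv ?_
  ext v
  simp only [InnerProductSpace.toDual_apply_apply, inner_sub_left, real_inner_smul_left,
    sub_apply, smul_apply, innerSL_apply_apply,
    smul_eq_mul]
  ring

/-- The descent lemma: `L Id - ∇f` monotone makes `L/2 ‖·‖² - f` convex. -/
theorem le_add_inner_add_of_hasGradientAt (hf : ∀ x, HasGradientAt f (g x) x) {L : ℝ}
    (hg : ∀ x y, ⟪g x - g y, x - y⟫ ≤ L * ‖x - y‖ ^ 2) (x z : E) :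
    f z ≤ f x + ⟪g x, z - x⟫ + L / 2 * ‖z - x‖ ^ 2 := by
  have hconv := add_inner_le_of_hasGradientAt_of_monotone
    (hasGradientAt_half_smul_norm_sq_sub hf L) (fun x y => ?_) x z
  · have hz : ‖z‖ ^ 2 = ‖x‖ ^ 2 + 2 * ⟪x, z - x⟫ + ‖z - x‖ ^ 2 := by
      rw [← norm_add_sq_real, add_sub_cancel]
    rw [inner_sub_left, real_inner_smul_left, hz] at hconv
    linarith
  · rw [show L • x - g x - (L • y - g y) = L • (x - y) - (g x - g y) by module,
      inner_sub_left, real_inner_smul_left, real_inner_self_eq_norm_sq]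
    linarith [hg x y]

/-- Baillon–Haddad: the gradient of a convex `L`-smooth function is `1/L`-cocoercive. -/
theorem cocoercive_of_hasGradientAt (hf : ∀ x, HasGradientAt f (g x) x) {L : ℝ} (hL : 0 < L)
    (hmono : ∀ x y, 0 ≤ ⟪g x - g y, x - y⟫)
    (hsmooth : ∀ x y, ⟪g x - g y, x - y⟫ ≤ L * ‖x - y‖ ^ 2) : Cocoercive g L⁻¹ := by
  have key (x y : E) : f y + ⟪g y, x - y⟫ + L⁻¹ / 2 * ‖g x - g y‖ ^ 2 ≤ f x := by
    -- compare both bounds at the gradient step `z = x - L⁻¹ (g x - g y)`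
    set w := L⁻¹ • (g x - g y)
    have hlower := add_inner_le_of_hasGradientAt_of_monotone hf hmono y (x - w)
    have hupper := le_add_inner_add_of_hasGradientAt hf hsmooth x (x - w)
    rw [show x - w - y = (x - y) - w by abel, inner_sub_right] at hlower
    rw [sub_sub_cancel_left, inner_neg_right, norm_neg] at hupper
    have hw : ⟪g x, w⟫ - ⟪g y, w⟫ = L⁻¹ * ‖g x - g y‖ ^ 2 := by
      rw [← inner_sub_left, real_inner_smul_right, real_inner_self_eq_norm_sq]
    have hw2 : L / 2 * ‖w‖ ^ 2 = L⁻¹ / 2 * ‖g x - g y‖ ^ 2 := by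
      rw [norm_smul, mul_pow, Real.norm_eq_abs, sq_abs]
      field_simp
    linarith
  intro x y
  have hsym : ⟪g y, x - y⟫ + ⟪g x, y - x⟫ = -⟪g x - g y, x - y⟫ := by
    rw [inner_sub_left, ← neg_sub x y, inner_neg_right]
    ring
  have hyx := key y x
  rw [norm_sub_rev] at hyx
  linarith [key x y]

end Gradient

section Averaged

variable {n : ℕ}

theorem averaged_iff_norm_sq {T : EuclideanSpace ℝ (Fin n) → EuclideanSpace ℝ (Fin n)}
    {α : ℝ} (hα : 0 < α) :
    Averaged T α ↔ ∀ x y,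
      ‖T x - T y‖ ^ 2 + (1 - 2 * α) * ‖x - y‖ ^ 2 ≤ 2 * (1 - α) * ⟪T x - T y, x - y⟫ := by
  -- both sides say `‖(T x - T y) - (1 - α)(x - y)‖ ≤ α ‖x - y‖`, with `S = α⁻¹ (T - (1 - α) Id)`
  have hsq (x y : EuclideanSpace ℝ (Fin n)) :
      ‖(T x - T y) - (1 - α) • (x - y)‖ ≤ α * ‖x - y‖ ↔
        ‖T x - T y‖ ^ 2 + (1 - 2 * α) * ‖x - y‖ ^ 2
          ≤ 2 * (1 - α) * ⟪T x - T y, x - y⟫ := by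
    rw [← sq_le_sq₀ (norm_nonneg _) (by positivity), norm_sub_sq_real, norm_smul,
      real_inner_smul_right, Real.norm_eq_abs, mul_pow, mul_pow, sq_abs]
    constructor <;> intro h <;> linarith
  simp_rw [← hsq]
  constructor
  · rintro ⟨S, hS, hTS⟩ x y
    rw [hTS x, hTS y, show (1 - α) • x + α • S x - ((1 - α) • y + α • S y) - (1 - α) • (x - y)
      = α • (S x - S y) by module, norm_smul, Real.norm_eq_abs, abs_of_pos hα]
    exact mul_le_mul_of_nonneg_left (hS x y) hα.le
  · intro h
    refine ⟨fun x => α⁻¹ • (T x - (1 - α) • x), fun x y => ?_, fun x => ?_⟩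
    · rw [show α⁻¹ • (T x - (1 - α) • x) - α⁻¹ • (T y - (1 - α) • y)
        = α⁻¹ • ((T x - T y) - (1 - α) • (x - y)) by module, norm_smul, Real.norm_eq_abs,
        abs_of_pos (inv_pos.2 hα), inv_mul_le_iff₀ hα]
      exact h x y
    · rw [smul_inv_smul₀ hα.ne']
      abel

theorem averaged_half_iff_cocoercive_one
    {T : EuclideanSpace ℝ (Fin n) → EuclideanSpace ℝ (Fin n)} :
    Averaged T (1 / 2) ↔ Cocoercive T 1 := by
  rw [averaged_iff_norm_sq one_half_pos]
  refine forall₂_congr fun x y => ?_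
  norm_num

theorem averaged_neg_iff {T : EuclideanSpace ℝ (Fin n) → EuclideanSpace ℝ (Fin n)}
    {α : ℝ} (hα : 0 < α) :
    Averaged (fun x => -T x) α ↔ ∀ x y,
      ‖T x - T y‖ ^ 2 + 2 * (1 - α) * ⟪T x - T y, x - y⟫ ≤ (2 * α - 1) * ‖x - y‖ ^ 2 := by
  rw [averaged_iff_norm_sq hα]
  refine forall₂_congr fun x y => ?_
  rw [neg_sub_neg, norm_sub_rev, ← neg_sub (T x), inner_neg_left]
  constructor <;> intro h <;> linarith

end Averaged

theorem stmt5 {n : ℕ} (f : EuclideanSpace ℝ (Fin n) → ℝ)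
    (f' : EuclideanSpace ℝ (Fin n) → EuclideanSpace ℝ (Fin n))
    (hf : ∀ x, HasGradientAt f (f' x) x)
    (δ : ℝ) (hδ0 : 0 < δ) (hδ1 : δ ≤ 1) :
    Averaged (fun x => (1/δ) • f' x) (1/2) ↔
    (Averaged f' (1/2) ∧ Averaged (fun x => -f' x) ((δ + 1)/2)) := by
  rw [averaged_half_iff_cocoercive_one, cocoercive_smul_iff (by positivity),
    averaged_half_iff_cocoercive_one, averaged_neg_iff (by positivity),
    show 2 * (1 - (δ + 1) / 2) = 1 - δ by ring, show 2 * ((δ + 1) / 2) - 1 = δ by ring,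
    mul_one, one_div]
  constructor
  · intro hcoco
    exact ⟨hcoco.weaken (one_le_inv₀ hδ0 |>.2 hδ1), hcoco.norm_sq_add_inner_le hδ0⟩
  · rintro ⟨hfirm, hneg⟩
    refine cocoercive_of_hasGradientAt hf hδ0 (fun x y => ?_) fun x y =>
      inner_le_of_norm_sq_add_inner_le hδ0.le (hneg x y)
    exact (by positivity : (0 : ℝ) ≤ 1 * _).trans (hfirm x y)
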